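/- For every solution x : [t₀, ∞) → ℝⁿ of the masked average-consensus system with x(t₀) = x₀, the ω-limit set of the trajectory is the singleton {(𝟙ᵀx₀/n)·𝟙}; i.e., a point p ∈ ℝⁿ satisfies p = lim_{k→∞} x(t_k) for some sequence t_k → ∞ if and only if p = (𝟙ᵀx₀/n)·𝟙. -/

import Mathlib

/-!
The masked system is the consensus flow `ẋ = -L (x + u)` driven by the perturbation
`u = Φ e^{-Σt} (x + e^{-Δt} γ) + e^{-Δt} γ`, whose size is at most `ρ(t) (1 + ‖x‖)` with `ρ → 0`.
Since `𝟙ᵀ L = 0`, the sum `𝟙ᵀ x` is conserved, so the disagreement `e = x - (𝟙ᵀ x₀ / n) 𝟙` stays in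
`𝟙^⊥`, where `L + Lᵀ` is coercive by compactness of the unit sphere. The Lyapunov function
`V = eᵀ e` therefore satisfies `V' ≤ -μ V + ε(t) (1 + V)` with `ε → 0`, and an integrating factor
shows `V → 0`. So `x(t)` converges to the average, which is then its only ω-limit point.
-/
open Set Filter Topology Matrix

/-- Right-hand side of the masked average-consensus system
`ẋ = -L (I + Φ e^{-Σ t}) (x + e^{-Δ t} γ)`, written componentwise through the
diagonal matrices `Φ = diag φ`, `Σ = diag σ`, `Δ = diag δ`. -/
noncomputable def maskedConsensusRHS {n : ℕ} (L : Matrix (Fin n) (Fin n) ℝ)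
    (φ σ δ γ : Fin n → ℝ) (t : ℝ) (x : Fin n → ℝ) : Fin n → ℝ :=
  -(L.mulVec (fun i => (1 + φ i * Real.exp (-σ i * t)) * (x i + Real.exp (-δ i * t) * γ i)))

theorem exists_pos_mul_norm_sq_le_of_pos {E : Type*} [NormedAddCommGroup E] [NormedSpace ℝ E]
    [FiniteDimensional ℝ E] (S : Submodule ℝ E) {Q : E → ℝ} (hQc : Continuous Q)
    (hQ : ∀ (a : ℝ) (w : E), Q (a • w) = a ^ 2 * Q w) (hQpos : ∀ w ∈ S, w ≠ 0 → 0 < Q w) :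
    ∃ μ > 0, ∀ w ∈ S, μ * ‖w‖ ^ 2 ≤ Q w := by
  set K : Set E := S ∩ Metric.sphere 0 1
  have hK : IsCompact K := (isCompact_sphere 0 1).inter_left S.closed_of_finiteDimensional
  have hnormalize : ∀ w ∈ S, w ≠ 0 → ‖w‖⁻¹ • w ∈ K ∧ Q w = ‖w‖ ^ 2 * Q (‖w‖⁻¹ • w) := by
    intro w hw hw0
    have hw0' : ‖w‖ ≠ 0 := norm_ne_zero_iff.2 hw0
    refine ⟨⟨S.smul_mem _ hw, by simp [norm_smul, hw0']⟩, ?_⟩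
    rw [hQ, ← mul_assoc, ← mul_pow, mul_inv_cancel₀ hw0', one_pow, one_mul]
  have hQ0 : Q 0 = 0 := by simpa using hQ 0 0
  rcases K.eq_empty_or_nonempty with hKe | hKne
  · refine ⟨1, one_pos, fun w hw => ?_⟩
    obtain rfl : w = 0 := by
      by_contra hw0
      exact hKe.subset (hnormalize w hw hw0).1
    simp [hQ0]
  obtain ⟨w₀, hw₀, hmin⟩ := hK.exists_isMinOn hKne hQc.continuousOn
  refine ⟨Q w₀, hQpos w₀ hw₀.1 (ne_zero_of_mem_sphere one_ne_zero ⟨w₀, hw₀.2⟩), fun w hw => ?_⟩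
  rcases eq_or_ne w 0 with rfl | hw0
  · simp [hQ0]
  obtain ⟨hwK, hQw⟩ := hnormalize w hw hw0
  rw [hQw, mul_comm]
  exact mul_le_mul_of_nonneg_left (hmin hwK) (by positivity)

theorem Matrix.exists_pos_mul_dotProduct_self_le {ι : Type*} [Fintype ι] (M : Matrix ι ι ℝ)
    (S : Submodule ℝ (ι → ℝ)) (hM : ∀ w ∈ S, w ≠ 0 → 0 < w ⬝ᵥ M *ᵥ w) :
    ∃ μ > 0, ∀ w ∈ S, μ * (w ⬝ᵥ w) ≤ w ⬝ᵥ M *ᵥ w := by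
  obtain ⟨μ, hμ, hle⟩ := exists_pos_mul_norm_sq_le_of_pos
    (S.comap (WithLp.linearEquiv 2 ℝ (ι → ℝ)).toLinearMap)
    (Q := fun w : EuclideanSpace ℝ ι => w.ofLp ⬝ᵥ M *ᵥ w.ofLp) (by fun_prop)
    (fun a w => by simp [Matrix.mulVec_smul]; ring)
    (fun w hw hw0 => hM w.ofLp hw (by simpa using hw0))
  refine ⟨μ, hμ, fun w hw => ?_⟩
  have hnorm : ‖WithLp.toLp 2 w‖ ^ 2 = w ⬝ᵥ w := by
    rw [EuclideanSpace.real_norm_sq_eq]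
    simp [dotProduct, sq]
  simpa [hnorm] using hle (WithLp.toLp 2 w) hw

theorem tendsto_zero_of_hasDerivAt_le_neg_mul_add {V W g : ℝ → ℝ} {m : ℝ} (hm : 0 < m)
    (hg : Tendsto g atTop (𝓝 0))
    (h : ∀ᶠ t in atTop, HasDerivAt V (W t) t ∧ 0 ≤ V t ∧ W t ≤ -m * V t + g t) :
    Tendsto V atTop (𝓝 0) := by
  refine tendsto_order.2 ⟨fun a ha => h.mono fun t ht => ha.trans_le ht.2.1, fun ε hε => ?_⟩
  obtain ⟨T, hT⟩ := eventually_atTop.1 <|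
    h.and (hg.eventually (eventually_le_nhds (by positivity : 0 < m * (ε / 2))))
  set F : ℝ → ℝ := fun t => Real.exp (m * t) * (V t - ε / 2)
  have hF : ∀ t ∈ Ici T, HasDerivAt F (Real.exp (m * t) * (m * (V t - ε / 2) + W t)) t := by
    intro t ht
    have hexp : HasDerivAt (fun s => Real.exp (m * s)) (Real.exp (m * t) * m) t := by
      simpa using ((hasDerivAt_id t).const_mul m).exp
    exact (hexp.fun_mul ((hT t ht).1.1.sub_const (ε / 2))).congr_deriv (by ring)
  have hanti : AntitoneOn F (Ici T) := by
    refine antitoneOn_of_hasDerivWithinAt_nonpos (convex_Ici T)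
      (fun t ht => (hF t ht).continuousAt.continuousWithinAt)
      (fun t ht => (hF t (interior_subset ht)).hasDerivWithinAt) fun t ht => ?_
    obtain ⟨⟨-, -, hW⟩, hgt⟩ := hT t (interior_subset ht)
    exact mul_nonpos_of_nonneg_of_nonpos (Real.exp_nonneg _) (by linarith)
  have hbound : ∀ t ∈ Ici T, V t ≤ ε / 2 + Real.exp (-(m * t)) * F T := by
    intro t ht
    calc V t = ε / 2 + Real.exp (-(m * t)) * F t := by
          simp only [F, ← mul_assoc, ← Real.exp_add, neg_add_cancel, Real.exp_zero]
          ring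
      _ ≤ ε / 2 + Real.exp (-(m * t)) * F T := by gcongr; exact hanti self_mem_Ici ht ht
  have hdecay : Tendsto (fun t => Real.exp (-(m * t)) * F T) atTop (𝓝 0) := by
    simpa using (Real.tendsto_exp_neg_atTop_nhds_zero.comp
      (tendsto_id.const_mul_atTop hm)).mul_const (F T)
  filter_upwards [eventually_ge_atTop T, hdecay.eventually (eventually_lt_nhds (half_pos hε))]
    with t ht hsmall
  linarith [hbound t ht]

theorem tendsto_zero_of_hasDerivAt_le_neg_mul_add_mul {V W ε : ℝ → ℝ} {m : ℝ} (hm : 0 < m)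
    (hε : Tendsto ε atTop (𝓝 0))
    (h : ∀ᶠ t in atTop, HasDerivAt V (W t) t ∧ 0 ≤ V t ∧ W t ≤ -m * V t + ε t * (1 + V t)) :
    Tendsto V atTop (𝓝 0) := by
  refine tendsto_zero_of_hasDerivAt_le_neg_mul_add (W := W) (half_pos hm) hε ?_
  filter_upwards [h, hε.eventually (eventually_le_nhds (half_pos hm))] with t ⟨hV, hV0, hW⟩ hεt
  refine ⟨hV, hV0, ?_⟩
  nlinarith

section Consensus

variable {ι : Type*} [Fintype ι]

theorem Matrix.abs_dotProduct_mulVec_le (A : Matrix ι ι ℝ) (v w : ι → ℝ) :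
    |v ⬝ᵥ A *ᵥ w| ≤ (∑ i, ∑ j, |A i j|) * ‖v‖ * ‖w‖ := by
  simp only [dotProduct, mulVec, Finset.mul_sum, Finset.sum_mul]
  refine (Finset.abs_sum_le_sum_abs _ _).trans (Finset.sum_le_sum fun i _ => ?_)
  refine (Finset.abs_sum_le_sum_abs _ _).trans (Finset.sum_le_sum fun j _ => ?_)
  rw [abs_mul, abs_mul, mul_left_comm, mul_assoc]
  exact mul_le_mul_of_nonneg_left
    (mul_le_mul (norm_le_pi_norm v i) (norm_le_pi_norm w j) (abs_nonneg _) (norm_nonneg _))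
    (abs_nonneg _)

theorem norm_sq_le_dotProduct_self (v : ι → ℝ) : ‖v‖ ^ 2 ≤ v ⬝ᵥ v := by
  have hv : 0 ≤ v ⬝ᵥ v := Finset.sum_nonneg fun i _ => mul_self_nonneg (v i)
  refine (Real.le_sqrt (norm_nonneg v) hv).1 <| (pi_norm_le_iff_of_nonneg (Real.sqrt_nonneg _)).2
    fun i => (Real.le_sqrt (norm_nonneg _) hv).2 ?_
  rw [Real.norm_eq_abs, sq_abs, sq]
  exact Finset.single_le_sum (fun j _ => mul_self_nonneg (v j)) (Finset.mem_univ i)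

theorem Matrix.sum_mulVec_eq_zero {L : Matrix ι ι ℝ} (hLT1 : Lᵀ *ᵥ (fun _ => (1 : ℝ)) = 0)
    (v : ι → ℝ) : ∑ i, (L *ᵥ v) i = 0 := by
  rw [← one_dotProduct, dotProduct_mulVec, ← mulVec_transpose]
  exact (congrArg (· ⬝ᵥ v) hLT1).trans (zero_dotProduct v)

theorem sum_sub_average_eq_zero (v : ι → ℝ) :
    ∑ i, (v i - (∑ j, v j) / Fintype.card ι) = 0 := by
  rcases isEmpty_or_nonempty ι with hι | hι
  · simp
  rw [Finset.sum_sub_distrib, Finset.sum_const, Finset.card_univ, nsmul_eq_mul,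
    mul_div_cancel₀ _ (by positivity), sub_self]

theorem HasDerivAt.dotProduct_self {x : ℝ → ι → ℝ} {x' : ι → ℝ} {t : ℝ} (hx : HasDerivAt x x' t) :
    HasDerivAt (fun s => x s ⬝ᵥ x s) (2 * (x t ⬝ᵥ x')) t := by
  have := HasDerivAt.fun_sum fun i (_ : i ∈ Finset.univ) =>
    (hasDerivAt_pi.1 hx i).fun_mul (hasDerivAt_pi.1 hx i)
  refine this.congr_deriv ?_
  simp only [dotProduct, Finset.mul_sum]
  exact Finset.sum_congr rfl fun i _ => by ring

theorem sum_apply_eq_of_hasDerivAt {x x' : ℝ → ι → ℝ} {t₀ : ℝ}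
    (hx : ∀ t ∈ Ici t₀, HasDerivAt x (x' t) t) (hx' : ∀ t ∈ Ici t₀, ∑ i, x' t i = 0) :
    ∀ t ∈ Ici t₀, ∑ i, x t i = ∑ i, x t₀ i := by
  have hd : ∀ s ∈ Ici t₀, HasDerivAt (fun s => ∑ i, x s i) 0 s := fun s hs => by
    simpa [hx' s hs] using
      HasDerivAt.fun_sum fun i (_ : i ∈ Finset.univ) => hasDerivAt_pi.1 (hx s hs) i
  exact fun t ht => constant_of_has_deriv_right_zero
    (fun s hs => (hd s hs.1).continuousAt.continuousWithinAt)
    (fun s hs => (hd s hs.1).hasDerivWithinAt) t ⟨ht, le_rfl⟩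

theorem two_mul_dotProduct_neg_mulVec_le {L : Matrix ι ι ℝ}
    (hL1 : L *ᵥ (fun _ => (1 : ℝ)) = 0) {μ ρ c : ℝ} {e u : ι → ℝ}
    (hμ : μ * (e ⬝ᵥ e) ≤ e ⬝ᵥ (L + Lᵀ) *ᵥ e) (hu : ‖u‖ ≤ ρ * (1 + ‖e + fun _ => c‖)) :
    2 * (e ⬝ᵥ -(L *ᵥ (e + (fun _ => c) + u))) ≤
      -μ * (e ⬝ᵥ e) + 2 * (∑ i, ∑ j, |L i j|) * (2 + |c|) * ρ * (1 + e ⬝ᵥ e) := by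
  set C := ∑ i, ∑ j, |L i j|
  have hC : 0 ≤ C := by positivity
  have hLc : L *ᵥ (fun _ => c) = 0 := by
    rw [show (fun _ => c) = c • fun _ : ι => (1 : ℝ) by ext; simp, mulVec_smul, hL1, smul_zero]
  have hsym : e ⬝ᵥ (L + Lᵀ) *ᵥ e = 2 * (e ⬝ᵥ L *ᵥ e) := by
    rw [add_mulVec, dotProduct_add, dotProduct_mulVec e Lᵀ, vecMul_transpose, dotProduct_comm]
    ring
  have hxc : ‖e + fun _ => c‖ ≤ ‖e‖ + |c| := by
    grw [norm_add_le, pi_norm_const_le c, Real.norm_eq_abs]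
  have hρ : 0 ≤ ρ := nonneg_of_mul_nonneg_left ((norm_nonneg u).trans hu) (by positivity)
  have hcross : -(e ⬝ᵥ L *ᵥ u) ≤ C * ‖e‖ * (ρ * (1 + (‖e‖ + |c|))) :=
    (neg_le_abs _).trans <| (L.abs_dotProduct_mulVec_le e u).trans <|
      mul_le_mul_of_nonneg_left (hu.trans (by gcongr)) (by positivity)
  have hquad : ‖e‖ * (1 + (‖e‖ + |c|)) ≤ (2 + |c|) * (1 + e ⬝ᵥ e) := by
    nlinarith [norm_sq_le_dotProduct_self e, sq_nonneg (‖e‖ - 1), abs_nonneg c, norm_nonneg e]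
  rw [mulVec_add, mulVec_add, hLc, add_zero, dotProduct_neg, dotProduct_add]
  nlinarith [mul_le_mul_of_nonneg_left hquad (mul_nonneg hC hρ)]

theorem tendsto_average_of_hasDerivAt_neg_mulVec_add {L : Matrix ι ι ℝ}
    (hL1 : L *ᵥ (fun _ => (1 : ℝ)) = 0) (hLT1 : Lᵀ *ᵥ (fun _ => (1 : ℝ)) = 0)
    (hLpos : ∀ w : ι → ℝ, w ≠ 0 → ∑ i, w i = 0 → 0 < w ⬝ᵥ (L + Lᵀ) *ᵥ w)
    {x u : ℝ → ι → ℝ} {ρ : ℝ → ℝ} {t₀ : ℝ}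
    (hx : ∀ t ∈ Ici t₀, HasDerivAt x (-(L *ᵥ (x t + u t))) t)
    (hu : ∀ t ∈ Ici t₀, ‖u t‖ ≤ ρ t * (1 + ‖x t‖)) (hρ : Tendsto ρ atTop (𝓝 0)) :
    Tendsto x atTop (𝓝 fun _ => (∑ i, x t₀ i) / Fintype.card ι) := by
  set c := (∑ i, x t₀ i) / Fintype.card ι
  obtain ⟨μ, hμ, hgap⟩ := (L + Lᵀ).exists_pos_mul_dotProduct_self_le
    (LinearMap.ker (Fintype.linearCombination ℝ fun _ => (1 : ℝ)))
    (fun w hw hw0 => hLpos w hw0 (by simpa [Fintype.linearCombination_apply] using hw))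
  have hsum := sum_apply_eq_of_hasDerivAt hx fun t _ => by
    simp only [Pi.neg_apply, Finset.sum_neg_distrib, L.sum_mulVec_eq_zero hLT1, neg_zero]
  set e : ℝ → ι → ℝ := fun t => x t - fun _ => c
  have hx_eq : ∀ t, x t = e t + fun _ => c := fun t => (sub_add_cancel _ _).symm
  have hgap_e : ∀ t ∈ Ici t₀, μ * (e t ⬝ᵥ e t) ≤ e t ⬝ᵥ (L + Lᵀ) *ᵥ e t := by
    intro t ht
    have hc : c = (∑ i, x t i) / Fintype.card ι := by rw [hsum t ht]
    refine hgap _ ?_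
    simpa [Fintype.linearCombination_apply, e, hc] using sum_sub_average_eq_zero (x t)
  have hV : Tendsto (fun t => e t ⬝ᵥ e t) atTop (𝓝 0) := by
    refine tendsto_zero_of_hasDerivAt_le_neg_mul_add_mul hμ
      (by simpa using hρ.const_mul (2 * (∑ i, ∑ j, |L i j|) * (2 + |c|)))
      (eventually_atTop.2 ⟨t₀, fun t ht => ⟨((hx t ht).sub_const _).dotProduct_self,
        (norm_sq_le_dotProduct_self _).trans' (sq_nonneg _), ?_⟩⟩)
    have := two_mul_dotProduct_neg_mulVec_le hL1 (hgap_e t ht) (by rw [← hx_eq]; exact hu t ht)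
    rwa [← hx_eq] at this
  have he : Tendsto e atTop (𝓝 0) := by
    refine tendsto_zero_iff_norm_tendsto_zero.2 <| squeeze_zero (fun t => norm_nonneg _)
      (fun t => Real.le_sqrt_of_sq_le (norm_sq_le_dotProduct_self (e t))) ?_
    simpa using hV.sqrt
  simpa [e] using he.add_const fun _ => c

end Consensus

noncomputable def expDecay {ι : Type*} (a r : ι → ℝ) (t : ℝ) : ι → ℝ :=
  fun i => a i * Real.exp (-r i * t)

theorem tendsto_expDecay {ι : Type*} (a : ι → ℝ) {r : ι → ℝ} (hr : ∀ i, 0 < r i) :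
    Tendsto (expDecay a r) atTop (𝓝 0) :=
  tendsto_pi_nhds.2 fun i => by
    simpa [expDecay, neg_mul] using (Real.tendsto_exp_neg_atTop_nhds_zero.comp
      (tendsto_id.const_mul_atTop (hr i))).const_mul (a i)

theorem maskedConsensusRHS_eq {n : ℕ} (L : Matrix (Fin n) (Fin n) ℝ) (φ σ δ γ : Fin n → ℝ)
    (t : ℝ) (y : Fin n → ℝ) :
    maskedConsensusRHS L φ σ δ γ t y =
      -(L *ᵥ (y + (expDecay φ σ t * (y + expDecay γ δ t) + expDecay γ δ t))) := by
  unfold maskedConsensusRHS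
  congr 2
  funext i
  simp only [expDecay, Pi.add_apply, Pi.mul_apply]
  ring

theorem norm_mul_add_add_le {R : Type*} [NonUnitalSeminormedRing R] (p y g : R) :
    ‖p * (y + g) + g‖ ≤ (‖p‖ + ‖p‖ * ‖g‖ + ‖g‖) * (1 + ‖y‖) := by
  grw [norm_add_le, norm_mul_le, norm_add_le]
  have := mul_nonneg (norm_nonneg p) (norm_nonneg g)
  nlinarith [norm_nonneg p, norm_nonneg y, norm_nonneg g]

theorem Filter.Tendsto.exists_seq_tendsto_comp_iff_eq {X : Type*} [TopologicalSpace X] [T2Space X]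
    {x : ℝ → X} {q : X} (hx : Tendsto x atTop (𝓝 q)) (p : X) :
    (∃ u : ℕ → ℝ, Tendsto u atTop atTop ∧ Tendsto (fun k => x (u k)) atTop (𝓝 p)) ↔ p = q := by
  refine ⟨fun ⟨u, hu, hxu⟩ => tendsto_nhds_unique hxu (hx.comp hu), ?_⟩
  rintro rfl
  exact ⟨_, tendsto_natCast_atTop_atTop, hx.comp tendsto_natCast_atTop_atTop⟩

theorem masked_consensus_omega_limit_set_general
    (n : ℕ) (L : Matrix (Fin n) (Fin n) ℝ) (φ σ δ γ : Fin n → ℝ)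
    (hL1 : L.mulVec (fun _ => (1 : ℝ)) = 0)
    (hLT1 : L.transpose.mulVec (fun _ => (1 : ℝ)) = 0)
    (hLpos : ∀ w : Fin n → ℝ, w ≠ 0 → (∑ i, w i) = 0 →
      0 < dotProduct w ((L + L.transpose).mulVec w))
    (hσ : ∀ i, 0 < σ i) (hδ : ∀ i, 0 < δ i)
    (t₀ : ℝ) (x₀ : Fin n → ℝ) (x : ℝ → Fin n → ℝ)
    (hinit : x t₀ = x₀)
    (hsol : ∀ t ∈ Set.Ici t₀, HasDerivAt x (maskedConsensusRHS L φ σ δ γ t (x t)) t) :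
    ∀ p : Fin n → ℝ,
      (∃ u : ℕ → ℝ, Filter.Tendsto u Filter.atTop Filter.atTop ∧
        Filter.Tendsto (fun k => x (u k)) Filter.atTop (nhds p)) ↔
      p = (fun _ => (∑ i, x₀ i) / n) := by
  have hp := (tendsto_expDecay φ hσ).norm
  have hg := (tendsto_expDecay γ hδ).norm
  have hconv := tendsto_average_of_hasDerivAt_neg_mulVec_add hL1 hLT1 hLpos
    (u := fun t => expDecay φ σ t * (x t + expDecay γ δ t) + expDecay γ δ t)
    (fun t ht => maskedConsensusRHS_eq L φ σ δ γ t (x t) ▸ hsol t ht)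
    (fun t _ => norm_mul_add_add_le _ _ _)
    (by simpa using (hp.add (hp.mul hg)).add hg)
  rw [hinit, Fintype.card_fin] at hconv
  exact hconv.exists_seq_tendsto_comp_iff_eq

/-- **Corollary 1, second conclusion (ω-limit set of the masked system).**
For every solution `x : [t₀, ∞) → ℝⁿ` of the masked average-consensus system
`ẋ = -L (I + Φ e^{-Σ t}) (x + e^{-Δ t} γ)` with `x(t₀) = x₀`, where `L` is an
irreducible weight-balanced Laplacian (`L𝟙 = Lᵀ𝟙 = 0`, `wᵀ(L+Lᵀ)w > 0` for
nonzero `w ⊥ 𝟙`) and `φᵢ, σᵢ, δᵢ > 0`, the ω-limit set of the trajectory is the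
singleton `{(𝟙ᵀx₀/n) 𝟙}`: a point `p` is the limit of `x(t_k)` along some
sequence `t_k → ∞` iff `p = (𝟙ᵀx₀/n) 𝟙`. -/
theorem masked_consensus_omega_limit_set
    (n : ℕ) (hn : 2 ≤ n) (L : Matrix (Fin n) (Fin n) ℝ) (φ σ δ γ : Fin n → ℝ)
    (hL1 : L.mulVec (fun _ => (1 : ℝ)) = 0)
    (hLT1 : L.transpose.mulVec (fun _ => (1 : ℝ)) = 0)
    (hLpos : ∀ w : Fin n → ℝ, w ≠ 0 → (∑ i, w i) = 0 →
      0 < dotProduct w ((L + L.transpose).mulVec w))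
    (hφ : ∀ i, 0 < φ i) (hσ : ∀ i, 0 < σ i) (hδ : ∀ i, 0 < δ i)
    (t₀ : ℝ) (ht₀ : 0 ≤ t₀) (x₀ : Fin n → ℝ) (x : ℝ → Fin n → ℝ)
    (hinit : x t₀ = x₀)
    (hsol : ∀ t ∈ Set.Ici t₀, HasDerivAt x (maskedConsensusRHS L φ σ δ γ t (x t)) t) :
    ∀ p : Fin n → ℝ,
      (∃ u : ℕ → ℝ, Filter.Tendsto u Filter.atTop Filter.atTop ∧
        Filter.Tendsto (fun k => x (u k)) Filter.atTop (nhds p)) ↔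
      p = (fun _ => (∑ i, x₀ i) / n) :=
  masked_consensus_omega_limit_set_general n L φ σ δ γ hL1 hLT1 hLpos hσ hδ t₀ x₀ x hinit hsol
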